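/- arXiv:2403.13939 — 2 statements merged into one kernel-verified Lean document; each statement's English description precedes it below -/
import Mathlib

section
/- For an integral domain R and an R-module M, the following are equivalent: (i) M is fusible; (ii) M is regular fusible; (iii) M is nonsingular; (iv) M is torsion free. -/
/-- `m` is a torsion element of the `R`-module `M`. -/
def IsTorsionElt (R M : Type*) [CommRing R] [AddCommGroup M] [Module R M] (m : M) : Prop :=
  ∃ r : R, r ≠ 0 ∧ r • m = 0

/-- `m` is a torsion-free element of the `R`-module `M` (`ann_R(m) = 0`). -/
def IsTorsionFreeElt (R M : Type*) [CommRing R] [AddCommGroup M] [Module R M] (m : M) : Prop :=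
  ∀ r : R, r • m = 0 → r = 0

/-- `r ∈ Zd(M)`: `r` is a zero divisor of the `R`-module `M`. -/
def IsZdElt (R M : Type*) [CommRing R] [AddCommGroup M] [Module R M] (r : R) : Prop :=
  ∃ m : M, m ≠ 0 ∧ r • m = 0

/-- `m` is fusible: it is the sum of a torsion and a torsion-free element. -/
def FusibleElt (R M : Type*) [CommRing R] [AddCommGroup M] [Module R M] (m : M) : Prop :=
  ∃ x y : M, IsTorsionElt R M x ∧ IsTorsionFreeElt R M y ∧ m = x + y

/-- `M` is a fusible `R`-module. -/
def FusibleModule (R M : Type*) [CommRing R] [AddCommGroup M] [Module R M] : Prop :=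
  ∀ m : M, m ≠ 0 → FusibleElt R M m

/-- `M` is a regular fusible `R`-module. -/
def RegularFusibleModule (R M : Type*) [CommRing R] [AddCommGroup M] [Module R M] : Prop :=
  ∀ m : M, m ≠ 0 → ∃ r : R, ¬ IsZdElt R M r ∧ FusibleElt R M (r • m)

/-- `m` is a singular element: `ann_R(m)` is an essential ideal of `R`. -/
def IsSingularElt (R M : Type*) [CommRing R] [AddCommGroup M] [Module R M] (m : M) : Prop :=
  ∀ J : Ideal R, J ≠ ⊥ → ∃ x : R, x ≠ 0 ∧ x ∈ J ∧ x • m = 0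

/-!
Over a domain, a torsion element `m` cannot be fusible: if `m = x + y` with `t • x = 0` and
`u • m = 0`, then `(u * t) • y = 0` with `u * t ≠ 0`, so `y` is not torsion free. Since every
multiple of a torsion element is torsion, a regular fusible module has no nonzero torsion;
conversely, in a torsion-free module every nonzero `m = 0 + m` is fusible. Nonsingularity
agrees with torsion-freeness because a nonzero ideal `J` of a domain meets `ann(m)` nontrivially
as soon as `r • m = 0` for some `r ≠ 0` (take `b * r` with `0 ≠ b ∈ J`).
-/

section CommRing

variable {R M : Type*} [CommRing R] [AddCommGroup M] [Module R M]

theorem isTorsionElt_zero [Nontrivial R] : IsTorsionElt R M 0 :=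
  ⟨1, one_ne_zero, smul_zero 1⟩

theorem IsTorsionElt.smul {m : M} (h : IsTorsionElt R M m) (s : R) :
    IsTorsionElt R M (s • m) := by
  obtain ⟨r, hr, hrm⟩ := h
  exact ⟨r, hr, by rw [smul_comm, hrm, smul_zero]⟩

theorem not_isZdElt_one : ¬ IsZdElt R M 1 := fun ⟨m, hm, h1m⟩ => hm (by simpa using h1m)

theorem isTorsionFreeElt_of_forall_isTorsionElt_eq_zero
    (h : ∀ m : M, IsTorsionElt R M m → m = 0) {m : M} (hm : m ≠ 0) :
    IsTorsionFreeElt R M m := fun r hr => by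
  by_contra hr0
  exact hm (h m ⟨r, hr0, hr⟩)

theorem FusibleModule.regularFusibleModule (h : FusibleModule R M) :
    RegularFusibleModule R M := fun m hm =>
  ⟨1, not_isZdElt_one, by simpa using h m hm⟩

theorem fusibleModule_of_forall_isTorsionElt_eq_zero [Nontrivial R]
    (h : ∀ m : M, IsTorsionElt R M m → m = 0) : FusibleModule R M := fun m hm =>
  ⟨0, m, isTorsionElt_zero, isTorsionFreeElt_of_forall_isTorsionElt_eq_zero h hm,
    (zero_add m).symm⟩

end CommRing

section IsDomain

variable {R M : Type*} [CommRing R] [IsDomain R] [AddCommGroup M] [Module R M]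

theorem FusibleElt.not_isTorsionElt {m : M} (h : FusibleElt R M m) : ¬ IsTorsionElt R M m := by
  obtain ⟨x, y, ⟨t, ht, htx⟩, hy, rfl⟩ := h
  rintro ⟨u, hu, hum⟩
  have hy0 : (u * t) • y = 0 := by
    calc (u * t) • y = t • u • (x + y) - u • t • x := by
          simp only [smul_add, smul_smul, mul_comm t u]; abel
      _ = 0 := by rw [hum, htx, smul_zero, smul_zero, sub_zero]
  exact mul_ne_zero hu ht (hy _ hy0)

theorem RegularFusibleModule.eq_zero_of_isTorsionElt (h : RegularFusibleModule R M) {m : M}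
    (hm : IsTorsionElt R M m) : m = 0 := by
  by_contra hm0
  obtain ⟨r, -, hr⟩ := h m hm0
  exact hr.not_isTorsionElt (hm.smul r)

theorem isSingularElt_iff_isTorsionElt {m : M} : IsSingularElt R M m ↔ IsTorsionElt R M m := by
  constructor
  · intro h
    obtain ⟨x, hx, -, hxm⟩ := h ⊤ top_ne_bot
    exact ⟨x, hx, hxm⟩
  · rintro ⟨r, hr, hrm⟩ J hJ
    obtain ⟨b, hbJ, hb⟩ := Submodule.exists_mem_ne_zero_of_ne_bot hJ
    exact ⟨b * r, mul_ne_zero hb hr, J.mul_mem_right r hbJ, by rw [mul_smul, hrm, smul_zero]⟩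

end IsDomain

/-- Over an integral domain the notions fusible, regular fusible, nonsingular and
torsion free coincide. -/
theorem fusible_tfae_of_isDomain (R M : Type*) [CommRing R] [IsDomain R]
    [AddCommGroup M] [Module R M] :
    List.TFAE [FusibleModule R M,
      RegularFusibleModule R M,
      ∀ m : M, IsSingularElt R M m → m = 0,
      ∀ m : M, IsTorsionElt R M m → m = 0] := by
  tfae_have 1 → 2 := FusibleModule.regularFusibleModule
  tfae_have 2 → 4 := fun h _ => h.eq_zero_of_isTorsionElt
  tfae_have 3 ↔ 4 := forall_congr' fun _ => by rw [isSingularElt_iff_isTorsionElt]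
  tfae_have 4 → 1 := fusibleModule_of_forall_isTorsionElt_eq_zero
  tfae_finish
end

section
/- Let R be a commutative ring, M a faithful R-module, and S a multiplicatively closed subset with S ⊆ R − Zd(M). If S⁻¹M is a regular fusible S⁻¹R-module, then M is a regular fusible R-module. -/
open nonZeroDivisors

section Fusible

variable {R M : Type*} [CommRing R] [AddCommGroup M] [Module R M]

lemma not_isZdElt_mul {a b : R} (ha : ¬ IsZdElt R M a) (hb : ¬ IsZdElt R M b) :
    ¬ IsZdElt R M (a * b) := by
  rintro ⟨m, hm, hab⟩
  rw [mul_smul] at hab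
  by_cases hbm : b • m = 0
  · exact hb ⟨m, hm, hbm⟩
  · exact ha ⟨b • m, hbm, hab⟩

lemma mem_nonZeroDivisors_of_not_isZdElt (hfaith : ∀ r : R, (∀ m : M, r • m = 0) → r = 0)
    {s : R} (hs : ¬ IsZdElt R M s) : s ∈ R⁰ := by
  refine mem_nonZeroDivisors_iff_right.2 fun b hbs => hfaith b fun m => ?_
  by_contra hbm
  exact hs ⟨b • m, hbm, by rw [smul_smul, mul_comm, hbs, zero_smul]⟩

lemma IsTorsionElt.smul_s12 {x : M} (hx : IsTorsionElt R M x) (r : R) :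
    IsTorsionElt R M (r • x) := by
  obtain ⟨a, ha, hax⟩ := hx
  exact ⟨a, ha, by rw [smul_comm, hax, smul_zero]⟩

lemma IsTorsionFreeElt.smul_s12 {y : M} (hy : IsTorsionFreeElt R M y) {s : R} (hs : s ∈ R⁰) :
    IsTorsionFreeElt R M (s • y) := fun b hb =>
  (mul_right_mem_nonZeroDivisors_eq_zero_iff hs).1 (hy _ (by rwa [mul_smul]))

end Fusible

section Localization

variable {R M : Type*} [CommRing R] [AddCommGroup M] [Module R M] {S : Submonoid R}

lemma LocalizedModule.mk_eq_zero_iff {m : M} {s : S} :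
    LocalizedModule.mk m s = 0 ↔ ∃ c : S, c • m = 0 := by
  rw [IsLocalizedModule.mk_eq_mk', IsLocalizedModule.mk'_eq_zero']

lemma Localization.mk_eq_zero_iff {r : R} {s : S} :
    Localization.mk r s = 0 ↔ ∃ c : S, c * r = 0 := by
  rw [Localization.mk_eq_mk', IsLocalization.mk'_eq_zero_iff]

lemma LocalizedModule.mk_ne_zero (hS : ∀ s ∈ S, ¬ IsZdElt R M s) {m : M} (hm : m ≠ 0)
    (s : S) : LocalizedModule.mk m s ≠ 0 := by
  rintro h
  obtain ⟨c, hc⟩ := LocalizedModule.mk_eq_zero_iff.1 h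
  exact hS c c.2 ⟨m, hm, hc⟩

lemma isTorsionElt_of_isTorsionElt_mk {x : M} {u : S}
    (hx : IsTorsionElt (Localization S) (LocalizedModule S M) (LocalizedModule.mk x u)) :
    IsTorsionElt R M x := by
  obtain ⟨A, hA, hAx⟩ := hx
  induction A using Localization.induction_on with | H p => ?_
  obtain ⟨a, t⟩ := p
  rw [LocalizedModule.mk_smul_mk, LocalizedModule.mk_eq_zero_iff] at hAx
  obtain ⟨c, hc⟩ := hAx
  refine ⟨c * a, fun hca => hA (Localization.mk_eq_zero_iff.2 ⟨c, hca⟩), ?_⟩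
  rwa [mul_smul]

lemma isTorsionFreeElt_of_isTorsionFreeElt_mk (hSR : S ≤ R⁰) {y : M} {v : S}
    (hy : IsTorsionFreeElt (Localization S) (LocalizedModule S M) (LocalizedModule.mk y v)) :
    IsTorsionFreeElt R M y := by
  intro b hb
  have hb1 : Localization.mk b (1 : S) • LocalizedModule.mk y v = 0 := by
    rw [LocalizedModule.mk_smul_mk, hb, LocalizedModule.zero_mk]
  obtain ⟨c, hc⟩ := Localization.mk_eq_zero_iff.1 (hy _ hb1)
  exact (mul_left_mem_nonZeroDivisors_eq_zero_iff (hSR c.2)).1 hc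

lemma not_isZdElt_of_not_isZdElt_mk (hS : ∀ s ∈ S, ¬ IsZdElt R M s) {r : R} {s : S}
    (hr : ¬ IsZdElt (Localization S) (LocalizedModule S M) (Localization.mk r s)) :
    ¬ IsZdElt R M r := by
  rintro ⟨m, hm, hrm⟩
  refine hr ⟨LocalizedModule.mk m 1, LocalizedModule.mk_ne_zero hS hm 1, ?_⟩
  rw [LocalizedModule.mk_smul_mk, hrm, LocalizedModule.zero_mk]

lemma exists_fusibleElt_smul_of_fusibleElt_mk (hSR : S ≤ R⁰) {m : M} {s : S}
    (hm : FusibleElt (Localization S) (LocalizedModule S M) (LocalizedModule.mk m s)) :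
    ∃ t : S, FusibleElt R M ((t : R) • m) := by
  obtain ⟨X, Y, hX, hY, hXY⟩ := hm
  induction X using LocalizedModule.induction_on with | h x u => ?_
  induction Y using LocalizedModule.induction_on with | h y v => ?_
  rw [LocalizedModule.mk_add_mk, LocalizedModule.mk_eq] at hXY
  obtain ⟨c, hc⟩ := hXY
  refine ⟨c * u * v, ((c * s * v : S) : R) • x, ((c * s * u : S) : R) • y,
    (isTorsionElt_of_isTorsionElt_mk hX).smul_s12 _,
    (isTorsionFreeElt_of_isTorsionFreeElt_mk hSR hY).smul_s12 (hSR (c * s * u).2), ?_⟩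
  simpa only [Submonoid.smul_def, Submonoid.coe_mul, smul_add, smul_smul, mul_assoc] using hc

end Localization

/-- If `M` is faithful, `S ⊆ R − Zd(M)` and `S⁻¹M` is regular fusible over `S⁻¹R`,
then `M` is a regular fusible `R`-module. -/
theorem regularFusible_of_localization (R M : Type*) [CommRing R] [AddCommGroup M]
    [Module R M] (hfaith : ∀ r : R, (∀ m : M, r • m = 0) → r = 0)
    (S : Submonoid R) (hS : ∀ s ∈ S, ¬ IsZdElt R M s)
    (h : RegularFusibleModule (Localization S) (LocalizedModule S M)) :
    RegularFusibleModule R M := by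
  have hSR : S ≤ R⁰ := fun s hs => mem_nonZeroDivisors_of_not_isZdElt hfaith (hS s hs)
  intro m hm
  obtain ⟨ρ, hρ, hρm⟩ := h _ (LocalizedModule.mk_ne_zero hS hm 1)
  induction ρ using Localization.induction_on with | H p => ?_
  obtain ⟨r, s⟩ := p
  rw [LocalizedModule.mk_smul_mk] at hρm
  obtain ⟨t, ht⟩ := exists_fusibleElt_smul_of_fusibleElt_mk hSR hρm
  refine ⟨t * r, not_isZdElt_mul (hS t t.2) (not_isZdElt_of_not_isZdElt_mk hS hρ), ?_⟩
  rwa [mul_smul]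
end
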